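/- In the polynomial ring ℤ[T], (Σ_{i=0}^{m+n−1} T^{k_i})·(T^m − 1)·(T^n − 1) = (T^{mn} − 1)·(T^{m+n} − 1); consequently Σ_{i=0}^{m+n−1} T^{k_i(m+n) − i·mn} = Σ_{i=0}^{m+n−1} T^{k_i}. -/

import Mathlib

/-!
`𝔉(m,n)` is the union of `{0, m, …, nm}` and `{0, n, …, mn}`, which meet only in `{0, mn}`
because `m` and `n` are coprime, so the first identity is a sum of two geometric series.
For `0 < j < n` the element `m * j` has index `j + ⌊mj/n⌋` in `𝔉(m,n)`, so its exponent
`k_i (m + n) - i m n` is `m * (mj mod n)`; multiplication by `m` permutes the residues mod `n`,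
hence these exponents run through the multiples of `m` again, and symmetrically for `n`.
-/

open Finset Polynomial

section

variable {M : Type*}

theorem sum_range_mul_mod [AddCommMonoid M] {m n : ℕ} (hmn : m.Coprime n) (g : ℕ → M) :
    ∑ j ∈ range n, g (m * j % n) = ∑ j ∈ range n, g j := by
  have hmaps : Set.MapsTo (fun j => m * j % n) (range n) (range n) := fun j hj =>
    mem_range.2 (Nat.mod_lt _ (pos_of_ne_zero (by rintro rfl; simp at hj)))
  have hinj : Set.InjOn (fun j => m * j % n) (range n) := fun a ha b hb hab =>
    Nat.ModEq.eq_of_lt_of_lt (Nat.ModEq.cancel_left_of_coprime hmn.symm hab)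
      (mem_range.1 ha) (mem_range.1 hb)
  exact sum_nbij _ hmaps hinj (surjOn_of_injOn_of_card_le _ hmaps hinj le_rfl) fun _ _ => rfl

theorem geom_sum_pow_mul_mul [Ring M] (x : M) (m N : ℕ) :
    (∑ j ∈ range N, x ^ (m * j)) * (x ^ m - 1) = x ^ (m * N) - 1 := by
  simp_rw [pow_mul]
  exact geom_sum_mul _ _

end

/-- The paper's `𝔉(m,n)`. -/
def multiplesUnion (m n : ℕ) : Finset ℕ :=
  (range (m * n + 1)).filter (fun x => m ∣ x ∨ n ∣ x)

def rankIn (s : Finset ℕ) (x : ℕ) : ℕ := #(s.filter (· < x))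

theorem rankIn_image_of_strictMonoOn {k : ℕ → ℕ} {N : ℕ} (hk : StrictMonoOn k (Set.Iio N))
    {i : ℕ} (hi : i < N) : rankIn ((range N).image k) (k i) = i := by
  have : ((range N).image k).filter (· < k i) = (range i).image k := by
    ext x
    simp only [mem_filter, mem_image, mem_range]
    constructor
    · rintro ⟨⟨j, hj, rfl⟩, hji⟩
      exact ⟨j, (hk.lt_iff_lt hj hi).1 hji, rfl⟩
    · rintro ⟨j, hj, rfl⟩
      exact ⟨⟨j, hj.trans hi, rfl⟩, hk (hj.trans hi) hi hj⟩
  rw [rankIn, this, card_image_of_injOn (hk.injOn.mono fun j hj => ?_), card_range]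
  exact (mem_range.1 hj).trans hi

namespace multiplesUnion

variable {m n : ℕ}

theorem mem_iff {x : ℕ} : x ∈ multiplesUnion m n ↔ (m ∣ x ∨ n ∣ x) ∧ x ≤ m * n := by
  simp only [multiplesUnion, mem_filter, mem_range, Nat.lt_succ_iff, and_comm]

theorem comm (m n : ℕ) : multiplesUnion n m = multiplesUnion m n := by
  ext x
  simp only [mem_iff, Nat.mul_comm n m, or_comm]

theorem eq_union (hm : 0 < m) (hn : 0 < n) :
    multiplesUnion m n = (range (n + 1)).image (m * ·) ∪ (range (m + 1)).image (n * ·) := by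
  ext x
  simp only [mem_iff, mem_union, mem_image, mem_range, Nat.lt_succ_iff]
  constructor
  · rintro ⟨⟨j, rfl⟩ | ⟨j, rfl⟩, hle⟩
    · exact Or.inl ⟨j, Nat.le_of_mul_le_mul_left hle hm, rfl⟩
    · exact Or.inr ⟨j, Nat.le_of_mul_le_mul_left (Nat.mul_comm m n ▸ hle) hn, rfl⟩
  · rintro (⟨j, hj, rfl⟩ | ⟨j, hj, rfl⟩)
    · exact ⟨Or.inl (dvd_mul_right m j), Nat.mul_le_mul_left m hj⟩
    · exact ⟨Or.inr (dvd_mul_right n j), Nat.mul_comm n m ▸ Nat.mul_le_mul_left n hj⟩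

theorem image_inter_image (hmn : m.Coprime n) :
    (range (n + 1)).image (m * ·) ∩ (range (m + 1)).image (n * ·) = {0, m * n} := by
  ext x
  simp only [mem_inter, mem_image, mem_range, Nat.lt_succ_iff, mem_insert, mem_singleton]
  constructor
  · rintro ⟨⟨a, ha, rfl⟩, ⟨b, hb, hba⟩⟩
    rcases Nat.eq_zero_or_pos a with rfl | ha0
    · exact Or.inl (mul_zero m)
    · have : n ∣ a := hmn.symm.dvd_of_dvd_mul_left ⟨b, hba.symm⟩
      exact Or.inr (by rw [le_antisymm ha (Nat.le_of_dvd ha0 this)])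
  · rintro (rfl | rfl)
    · exact ⟨⟨0, Nat.zero_le n, mul_zero m⟩, ⟨0, Nat.zero_le m, mul_zero n⟩⟩
    · exact ⟨⟨n, le_rfl, rfl⟩, ⟨m, le_rfl, Nat.mul_comm n m⟩⟩

/-- `𝔉(m,n)` is `{0, m, …, nm} ∪ {0, n, …, mn}`, overlapping in `{0, mn}`. -/
theorem sum_inclusion_exclusion (hm : 0 < m) (hn : 0 < n) (hmn : m.Coprime n) {M : Type*}
    [AddCommMonoid M] (g : ℕ → M) :
    ∑ x ∈ multiplesUnion m n, g x + (g 0 + g (m * n)) =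
      ∑ j ∈ range (n + 1), g (m * j) + ∑ j ∈ range (m + 1), g (n * j) := by
  rw [eq_union hm hn, ← sum_pair (Nat.mul_pos hm hn).ne, ← image_inter_image hmn,
    sum_union_inter, sum_image (fun _ _ _ _ h => Nat.eq_of_mul_eq_mul_left hm h),
    sum_image (fun _ _ _ _ h => Nat.eq_of_mul_eq_mul_left hn h)]

theorem card (hm : 0 < m) (hn : 0 < n) (hmn : m.Coprime n) : #(multiplesUnion m n) = m + n := by
  have := sum_inclusion_exclusion hm hn hmn (fun _ => 1)
  simp only [sum_const, card_range, smul_eq_mul, mul_one] at this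
  omega

theorem rankIn_mul_self (hm : 0 < m) (hn : 0 < n) (hmn : m.Coprime n) :
    rankIn (multiplesUnion m n) (m * n) = m + n - 1 := by
  have : (multiplesUnion m n).filter (· < m * n) = (multiplesUnion m n).erase (m * n) := by
    ext x
    simp only [mem_filter, mem_erase, mem_iff]
    omega
  rw [rankIn, this, card_erase_of_mem (mem_iff.2 ⟨Or.inl (dvd_mul_right m n), le_rfl⟩),
    card hm hn hmn]

/-- Below `m * j` lie the `j` multiples `m * i`, `i < j`, and the `m * j / n + 1` multiples
`n * i`, `i ≤ m * j / n`, with `0` counted twice. -/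
theorem rankIn_mul (hm : 0 < m) (hmn : m.Coprime n) {j : ℕ} (hj : 0 < j) (hjn : j < n) :
    rankIn (multiplesUnion m n) (m * j) = j + m * j / n := by
  have hn : 0 < n := hj.trans hjn
  have hndvd : ¬ n ∣ m * j := fun h =>
    absurd (Nat.le_of_dvd hj (hmn.symm.dvd_of_dvd_mul_left h)) (not_le.2 hjn)
  have hq : m * j / n ≤ m :=
    Nat.div_le_of_le_mul (by rw [Nat.mul_comm n m]; exact Nat.mul_le_mul_left m hjn.le)
  have hA : (range (n + 1)).filter (fun i => m * i < m * j) = range j := by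
    ext i
    simp only [mem_filter, mem_range, Nat.mul_lt_mul_left hm]
    omega
  have hB : (range (m + 1)).filter (fun i => n * i < m * j) = range (m * j / n + 1) := by
    ext i
    simp only [mem_filter, mem_range, Nat.lt_succ_iff]
    rw [Nat.le_div_iff_mul_le hn, Nat.mul_comm i n]
    constructor
    · exact fun h => h.2.le
    · intro h
      refine ⟨(Nat.le_div_iff_mul_le hn).2 (Nat.mul_comm i n ▸ h) |>.trans hq,
        lt_of_le_of_ne h fun he => hndvd ⟨i, he.symm⟩⟩
  have := sum_inclusion_exclusion hm hn hmn (fun x => if x < m * j then 1 else 0)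
  simp only [← card_filter, hA, hB, card_range, Nat.mul_pos hm hj, if_true,
    if_neg (not_lt.2 (Nat.mul_le_mul_left m hjn.le))] at this
  rw [rankIn]
  omega

end multiplesUnion

/-- For the increasing enumeration `k` of `𝔉(m,n)`,
`shiftedExponent m n (k i) = k i * (m + n) - i * (m * n)`. -/
def shiftedExponent (m n x : ℕ) : ℕ := x * (m + n) - rankIn (multiplesUnion m n) x * (m * n)

namespace shiftedExponent

variable {m n : ℕ}

theorem comm (m n : ℕ) : shiftedExponent n m = shiftedExponent m n := by
  ext x
  rw [shiftedExponent, shiftedExponent, multiplesUnion.comm, Nat.add_comm n m, Nat.mul_comm n m]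

theorem mul_self (hm : 0 < m) (hn : 0 < n) (hmn : m.Coprime n) :
    shiftedExponent m n (m * n) = m * n := by
  rw [shiftedExponent, multiplesUnion.rankIn_mul_self hm hn hmn]
  obtain ⟨s, hs⟩ : ∃ s, m + n = s + 1 := ⟨m + n - 1, by omega⟩
  rw [hs, Nat.add_sub_cancel, Nat.mul_succ, Nat.mul_comm s, Nat.add_sub_cancel_left]

theorem mul_of_lt (hm : 0 < m) (hmn : m.Coprime n) {j : ℕ} (hjn : j < n) :
    shiftedExponent m n (m * j) = m * (m * j % n) := by
  rcases Nat.eq_zero_or_pos j with rfl | hj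
  · simp [shiftedExponent]
  rw [shiftedExponent, multiplesUnion.rankIn_mul hm hmn hj hjn]
  refine Nat.sub_eq_of_eq_add ?_
  have hdiv := Nat.div_add_mod (m * j) n
  calc m * j * (m + n) = (n * (m * j / n) + m * j % n) * m + m * j * n := by rw [hdiv]; ring
    _ = m * (m * j % n) + (j + m * j / n) * (m * n) := by ring

theorem sum_range_succ_mul (hm : 0 < m) (hn : 0 < n) (hmn : m.Coprime n) {M : Type*}
    [AddCommMonoid M] (f : ℕ → M) :
    ∑ j ∈ range (n + 1), f (shiftedExponent m n (m * j)) = ∑ j ∈ range (n + 1), f (m * j) := by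
  rw [sum_range_succ, sum_range_succ, mul_self hm hn hmn,
    sum_congr rfl fun j hj => congrArg f (mul_of_lt hm hmn (mem_range.1 hj)),
    sum_range_mul_mod hmn (fun r => f (m * r))]

theorem sum_multiplesUnion (hm : 0 < m) (hn : 0 < n) (hmn : m.Coprime n) {M : Type*}
    [AddCancelCommMonoid M] (f : ℕ → M) :
    ∑ x ∈ multiplesUnion m n, f (shiftedExponent m n x) = ∑ x ∈ multiplesUnion m n, f x := by
  have hshift := multiplesUnion.sum_inclusion_exclusion hm hn hmn (f ∘ shiftedExponent m n)
  have hsymm := sum_range_succ_mul hn hm hmn.symm f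
  rw [comm] at hsymm
  simp only [Function.comp_apply, sum_range_succ_mul hm hn hmn, hsymm, mul_self hm hn hmn] at hshift
  rw [← multiplesUnion.sum_inclusion_exclusion hm hn hmn f] at hshift
  exact add_right_cancel (hshift.trans (by simp [shiftedExponent]))

end shiftedExponent

/-- Let `k` be the increasing enumeration of `𝔉(m,n)`.
In `ℤ[T]` one has
`(Σ_{i<m+n} T^(k i)) * (T^m - 1) * (T^n - 1) = (T^(mn) - 1) * (T^(m+n) - 1)`,
and consequently `Σ_{i<m+n} T^(k i * (m+n) - i*m*n) = Σ_{i<m+n} T^(k i)`. -/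
theorem sum_Tk_identity (m n : ℕ) (hm : 2 ≤ m) (hmn : m < n)
    (hcop : Nat.Coprime m n) (k : ℕ → ℕ)
    (hmono : ∀ i j : ℕ, i < j → j < m + n → k i < k j)
    (hmem : ∀ x : ℕ, ((m ∣ x ∨ n ∣ x) ∧ x ≤ m * n) ↔ ∃ i < m + n, k i = x) :
    (∑ i ∈ Finset.range (m + n), (Polynomial.X : Polynomial ℤ) ^ (k i)) *
        (Polynomial.X ^ m - 1) * (Polynomial.X ^ n - 1) =
      (Polynomial.X ^ (m * n) - 1) * (Polynomial.X ^ (m + n) - 1) ∧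
    ∑ i ∈ Finset.range (m + n),
        (Polynomial.X : Polynomial ℤ) ^ (k i * (m + n) - i * (m * n)) =
      ∑ i ∈ Finset.range (m + n), (Polynomial.X : Polynomial ℤ) ^ (k i) := by
  have hm0 : 0 < m := by omega
  have hn0 : 0 < n := by omega
  have hk : StrictMonoOn k (Set.Iio (m + n)) := fun i _ j hj hij => hmono i j hij hj
  have hF : multiplesUnion m n = (range (m + n)).image k := by
    ext x
    simp only [multiplesUnion.mem_iff, hmem, mem_image, mem_range]
  have hsum (f : ℕ → ℤ[X]) : ∑ i ∈ range (m + n), f (k i) = ∑ x ∈ multiplesUnion m n, f x := by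
    rw [hF, sum_image (by simpa only [coe_range] using hk.injOn)]
  refine ⟨?_, ?_⟩
  · have hsplit := multiplesUnion.sum_inclusion_exclusion hm0 hn0 hcop ((X : ℤ[X]) ^ ·)
    have hgeom_m := geom_sum_pow_mul_mul (X : ℤ[X]) m (n + 1)
    have hgeom_n := geom_sum_pow_mul_mul (X : ℤ[X]) n (m + 1)
    rw [pow_zero] at hsplit
    rw [Nat.mul_succ, pow_add] at hgeom_m hgeom_n
    rw [Nat.mul_comm n m] at hgeom_n
    rw [hsum, pow_add]
    linear_combination (X ^ m - 1) * (X ^ n - 1) * hsplit + (X ^ n - 1) * hgeom_m +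
      (X ^ m - 1) * hgeom_n
  · have hexp : ∀ i ∈ range (m + n),
        k i * (m + n) - i * (m * n) = shiftedExponent m n (k i) := fun i hi => by
      rw [shiftedExponent, hF, rankIn_image_of_strictMonoOn hk (mem_range.1 hi)]
    rw [sum_congr rfl fun i hi => congrArg (X ^ ·) (hexp i hi),
      hsum (fun x => X ^ shiftedExponent m n x), hsum,
      shiftedExponent.sum_multiplesUnion hm0 hn0 hcop]
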